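/- Let R be a finite commutative local ring which is not a field. Then the number of polynomial functions on the ring of dual numbers R[α] satisfies |F(R[α])| = |F(R)|² · |St_α(R)|, where |F(R)| is the number of polynomial functions on R and |St_α(R)| is the order of the pointwise stabilizer of R in the group of polynomial permutations of R[α]. -/

import Mathlib

open Polynomial

/-- The set of polynomial functions on a commutative ring `A`. -/
def polyFunctions (A : Type*) [CommRing A] : Set (A → A) :=
  {G : A → A | ∃ f : Polynomial A, ∀ a, G a = f.eval a}

/-- The pointwise stabilizer `St_α(R)` of `R` in the group of polynomial
permutations of the dual numbers `R[α]`. -/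
def polyStabilizer (R : Type*) [CommRing R] :
    Set (DualNumber R → DualNumber R) :=
  {G : DualNumber R → DualNumber R |
    (∃ f : Polynomial (DualNumber R), ∀ a, G a = f.eval a) ∧
      Function.Bijective G ∧
        ∀ r : R, G (algebraMap R (DualNumber R) r) = algebraMap R (DualNumber R) r}

section AuxDN
open TrivSqZeroExt DualNumber

namespace DNAux

variable {R : Type*} [CommRing R]

noncomputable def p1 (f : Polynomial (DualNumber R)) : Polynomial R :=
  f.map (TrivSqZeroExt.fstHom R R R).toRingHom

noncomputable def p2 (f : Polynomial (DualNumber R)) : Polynomial R :=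
  ⟨AddMonoidAlgebra.ofCoeff (f.toFinsupp.coeff.mapRange TrivSqZeroExt.snd (TrivSqZeroExt.snd_zero))⟩

@[simp] lemma coeff_p1 (f : Polynomial (DualNumber R)) (n : ℕ) :
    (p1 f).coeff n = (f.coeff n).fst := by
  simp [p1, coeff_map]

@[simp] lemma coeff_p2 (f : Polynomial (DualNumber R)) (n : ℕ) :
    (p2 f).coeff n = (f.coeff n).snd := by
  simp [p2, Polynomial.coeff]

lemma p1_add (f g : Polynomial (DualNumber R)) : p1 (f + g) = p1 f + p1 g := by
  simp [p1]

lemma p2_add (f g : Polynomial (DualNumber R)) : p2 (f + g) = p2 f + p2 g := by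
  ext n; simp

lemma p1_monomial (n : ℕ) (c : DualNumber R) :
    p1 (monomial n c) = monomial n c.fst := by
  ext m; simp [coeff_monomial, apply_ite TrivSqZeroExt.fst]

lemma p2_monomial (n : ℕ) (c : DualNumber R) :
    p2 (monomial n c) = monomial n c.snd := by
  ext m; simp [coeff_monomial, apply_ite TrivSqZeroExt.snd]

lemma eval_fst (f : Polynomial (DualNumber R)) (x : DualNumber R) :
    (f.eval x).fst = (p1 f).eval x.fst := by
  induction f using Polynomial.induction_on' with
  | add p q hp hq => simp [p1_add, hp, hq]
  | monomial n c => simp [p1_monomial, fst_mul, fst_pow]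

lemma eval_snd (f : Polynomial (DualNumber R)) (x : DualNumber R) :
    (f.eval x).snd = x.snd * (derivative (p1 f)).eval x.fst + (p2 f).eval x.fst := by
  induction f using Polynomial.induction_on' with
  | add p q hp hq => simp only [eval_add, TrivSqZeroExt.snd_add, p1_add, p2_add, map_add, hp, hq]; ring
  | monomial n c =>
      simp [p1_monomial, p2_monomial, DualNumber.snd_mul, fst_pow, snd_pow, derivative_monomial,
        smul_eq_mul, nsmul_eq_mul]
      ring

/-- the lift of `f + ε g` to a polynomial over the dual numbers -/
noncomputable def comb (f g : Polynomial R) : Polynomial (DualNumber R) :=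
  f.map (TrivSqZeroExt.inlHom R R) + C ε * g.map (TrivSqZeroExt.inlHom R R)

lemma p1_comb (f g : Polynomial R) : p1 (comb f g) = f := by
  ext n
  simp [comb, coeff_map, fst_mul]

lemma p2_comb (f g : Polynomial R) : p2 (comb f g) = g := by
  ext n
  simp [comb, coeff_map, DualNumber.snd_mul]

lemma taylor_sq (h : Polynomial R) (a t : R) (ht : t * t = 0) :
    h.eval (a + t) = h.eval a + t * (derivative h).eval a := by
  let ψ : DualNumber R →ₐ[R] R :=
    DualNumber.lift ⟨(AlgHom.id R R, t), ht, fun a => Commute.all _ _⟩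
  have hx : ∀ x : DualNumber R, ψ x = x.fst + x.snd * t := fun x =>
    DualNumber.lift_apply_apply _ x
  have haev : ∀ x : DualNumber R, (Polynomial.aeval x h : DualNumber R) =
      (h.map (TrivSqZeroExt.inlHom R R)).eval x := by
    intro x
    rw [Polynomial.aeval_def, ← Polynomial.eval_map]
    congr 1
  have key : ∀ x : DualNumber R, h.eval (ψ x) = ψ (Polynomial.aeval x h) := by
    intro x
    rw [← Polynomial.aeval_algHom_apply]
    rw [Polynomial.aeval_def]
    rfl
  have hfst : ∀ x : DualNumber R, (Polynomial.aeval x h : DualNumber R).fst = h.eval x.fst := by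
    intro x; rw [haev, eval_fst]
    have : p1 (h.map (TrivSqZeroExt.inlHom R R)) = h := by
      have := p1_comb h (0 : Polynomial R)
      simpa [comb] using this
    rw [this]
  have hsnd : ∀ x : DualNumber R,
      (Polynomial.aeval x h : DualNumber R).snd = x.snd * (derivative h).eval x.fst := by
    intro x; rw [haev, eval_snd]
    have h1 : p1 (h.map (TrivSqZeroExt.inlHom R R)) = h := by
      have := p1_comb h (0 : Polynomial R); simpa [comb] using this
    have h2 : p2 (h.map (TrivSqZeroExt.inlHom R R)) = 0 := by
      have := p2_comb h (0 : Polynomial R); simpa [comb] using this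
    rw [h1, h2]; simp
  have h0 := key (TrivSqZeroExt.inl a + ε)
  rw [hx, hx] at h0
  simp only [hfst, hsnd, TrivSqZeroExt.fst_add, TrivSqZeroExt.snd_add, fst_inl, snd_inl,
    fst_eps, snd_eps, add_zero, zero_add, one_mul] at h0
  rw [h0]; ring


section Local

variable (R : Type*) [CommRing R] [IsLocalRing R]

lemma unit_of_mem_max {y : R} (h : y ∈ IsLocalRing.maximalIdeal R) : IsUnit (1 + y) := by
  by_contra hu
  have h2 : (1 + y : R) ∈ IsLocalRing.maximalIdeal R := hu
  have h1 : (1 : R) ∈ IsLocalRing.maximalIdeal R := by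
    have := Ideal.sub_mem _ h2 h
    simpa using this
  exact (IsLocalRing.maximalIdeal.isMaximal R).ne_top
    (Ideal.eq_top_of_unit_mem _ _ 1 h1 (by simp))

lemma unit_of_ann {t y : R} (ht : t ≠ 0) (h : t * y = 0) : IsUnit (1 + y) := by
  apply unit_of_mem_max
  show ¬ IsUnit y
  intro hu
  apply ht
  obtain ⟨u, rfl⟩ := hu
  calc t = t * u * u.inv := by rw [mul_assoc, u.val_inv]; ring
  _ = 0 := by rw [h, zero_mul]

variable [Finite R]

lemma exists_sq_zero (hR : ¬IsField R) : ∃ t : R, t ≠ 0 ∧ t * t = 0 := by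
  have hm : IsLocalRing.maximalIdeal R ≠ ⊥ := by
    intro h
    exact hR (IsLocalRing.isField_iff_maximalIdeal_eq.mpr h)
  obtain ⟨x, hx, hx0⟩ := Submodule.exists_mem_ne_zero_of_ne_bot hm
  have hnil : ∃ n, x ^ n = 0 := by
    obtain ⟨i, j, hij, hpow⟩ := Finite.exists_ne_map_eq_of_infinite (fun n : ℕ => x ^ n)
    wlog hlt : i < j generalizing i j
    · exact this j i hij.symm hpow.symm (by omega)
    have hu : IsUnit (1 + -x ^ (j - i)) := by
      apply unit_of_mem_max
      exact neg_mem (Ideal.pow_mem_of_mem _ hx _ (by omega))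
    refine ⟨i, ?_⟩
    have hz : x ^ i * (1 + -x ^ (j - i)) = 0 := by
      have : x ^ i * x ^ (j - i) = x ^ j := by
        rw [← pow_add]; congr 1; omega
      rw [mul_add, mul_one, mul_neg, this, ← hpow]; ring
    exact (hu.mul_left_eq_zero).mp hz
  classical
  have hex : ∃ n, x ^ n = 0 := hnil
  let n := Nat.find hex
  have hn : x ^ n = 0 := Nat.find_spec hex
  have hn2 : 2 ≤ n := by
    rcases Nat.lt_or_ge n 2 with h | h
    · interval_cases n
      · simp at hn
      · simp at hn; exact absurd hn hx0
    · exact h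
  refine ⟨x ^ (n - 1), ?_, ?_⟩
  · exact Nat.find_min hex (by omega)
  · rw [← pow_add]
    have : x ^ (n - 1 + (n - 1)) = x ^ n * x ^ (n - 2) := by
      rw [← pow_add]; congr 1; omega
    rw [this, hn, zero_mul]

end Local


section Count

variable {R : Type*} [CommRing R]

def D0 (R : Type*) [CommRing R] : Set (R → R) :=
  {d | ∃ h : Polynomial R, (∀ a, h.eval a = 0) ∧ ∀ a, d a = (derivative h).eval a}

def SS (R : Type*) [CommRing R] : Set ((R → R) × (R → R)) :=
  {p | ∃ f : Polynomial R, (∀ a, p.1 a = f.eval a) ∧ ∀ a, p.2 a = (derivative f).eval a}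

def c1 (F : DualNumber R → DualNumber R) : R → R := fun a => (F (inl a)).fst
def c2 (F : DualNumber R → DualNumber R) : R → R := fun a => (F (inl a)).snd
def cD (F : DualNumber R → DualNumber R) : R → R :=
  fun a => (F (inl a + ε)).snd - (F (inl a)).snd

variable {F : DualNumber R → DualNumber R} {f : Polynomial (DualNumber R)}

lemma c1_eq (hF : ∀ x, F x = f.eval x) (a : R) : c1 F a = (p1 f).eval a := by
  simp [c1, hF, eval_fst]

lemma c2_eq (hF : ∀ x, F x = f.eval x) (a : R) : c2 F a = (p2 f).eval a := by
  simp [c2, hF, eval_snd]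

lemma cD_eq (hF : ∀ x, F x = f.eval x) (a : R) : cD F a = (derivative (p1 f)).eval a := by
  simp [cD, hF, eval_snd, TrivSqZeroExt.fst_add, TrivSqZeroExt.snd_add, fst_inl, snd_inl,
    fst_eps, snd_eps]

lemma reconstruct (hF : ∀ x, F x = f.eval x) (x : DualNumber R) :
    F x = inl (c1 F x.fst) + inr (x.snd * cD F x.fst + c2 F x.fst) := by
  apply TrivSqZeroExt.ext
  · rw [c1_eq hF, hF, eval_fst]
    simp
  · rw [c2_eq hF, cD_eq hF, hF, eval_snd]
    simp

noncomputable def Phi (F : ↥(polyFunctions (DualNumber R))) :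
    ↥(SS R) × ↥(polyFunctions R) :=
  ⟨⟨(c1 F.1, cD F.1), by
      obtain ⟨f, hf⟩ := F.2
      exact ⟨p1 f, fun a => c1_eq hf a, fun a => cD_eq hf a⟩⟩,
   ⟨c2 F.1, by obtain ⟨f, hf⟩ := F.2; exact ⟨p2 f, fun a => c2_eq hf a⟩⟩⟩

lemma Phi_bij : Function.Bijective (Phi (R := R)) := by
  constructor
  · rintro ⟨F, hF⟩ ⟨G, hG⟩ h
    simp only [Phi, Subtype.mk.injEq, Prod.mk.injEq] at h
    obtain ⟨⟨h1, h2⟩, h3⟩ := h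
    apply Subtype.ext
    funext x
    obtain ⟨f, hf⟩ := hF
    obtain ⟨g, hg⟩ := hG
    show F x = G x
    rw [reconstruct hf x, reconstruct hg x, h1, h2, h3]
  · rintro ⟨⟨⟨F1, D⟩, hS⟩, ⟨F2, hF2⟩⟩
    obtain ⟨f, hf1, hfD⟩ := hS
    obtain ⟨g, hg⟩ := hF2
    have hw : ∀ x : DualNumber R, (fun x => (comb f g).eval x) x = (comb f g).eval x :=
      fun _ => rfl
    refine ⟨⟨fun x => (comb f g).eval x, ⟨comb f g, fun _ => rfl⟩⟩, ?_⟩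
    apply Prod.ext
    · apply Subtype.ext
      apply Prod.ext
      · funext a
        rw [show ((Phi ⟨fun x => (comb f g).eval x, ⟨comb f g, fun _ => rfl⟩⟩).1 : (R → R) × (R → R)).1 a
            = c1 (fun x => (comb f g).eval x) a from rfl, c1_eq hw, p1_comb, ← hf1]
      · funext a
        rw [show ((Phi ⟨fun x => (comb f g).eval x, ⟨comb f g, fun _ => rfl⟩⟩).1 : (R → R) × (R → R)).2 a
            = cD (fun x => (comb f g).eval x) a from rfl, cD_eq hw, p1_comb, ← hfD]
    · apply Subtype.ext
      funext a
      rw [show ((Phi ⟨fun x => (comb f g).eval x, ⟨comb f g, fun _ => rfl⟩⟩).2 : R → R) a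
          = c2 (fun x => (comb f g).eval x) a from rfl, c2_eq hw, p2_comb, ← hg]

noncomputable def Psi (p : ↥(polyFunctions R) × ↥(D0 R)) : ↥(SS R) :=
  ⟨((p.1 : R → R), fun a => (derivative (Classical.choose p.1.2)).eval a + (p.2 : R → R) a), by
    obtain ⟨h, hnull, hd⟩ := p.2.2
    refine ⟨Classical.choose p.1.2 + h, fun a => ?_, fun a => ?_⟩
    · rw [eval_add, hnull, add_zero]
      exact Classical.choose_spec p.1.2 a
    · simp [hd a]⟩

lemma Psi_bij : Function.Bijective (Psi (R := R)) := by
  constructor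
  · rintro ⟨⟨F1, h1⟩, ⟨d, hd⟩⟩ ⟨⟨G1, hg1⟩, ⟨e, he⟩⟩ h
    simp only [Psi, Subtype.mk.injEq, Prod.mk.injEq] at h
    obtain ⟨hFG, h2⟩ := h
    subst hFG
    refine Prod.ext (Subtype.ext rfl) (Subtype.ext ?_)
    funext a
    have := congrFun h2 a
    exact add_left_cancel this
  · rintro ⟨⟨F1, D⟩, hS⟩
    obtain ⟨g, hg1, hgD⟩ := hS
    have hmem : F1 ∈ polyFunctions R := ⟨g, hg1⟩
    have hdmem : (fun a => D a - (derivative (Classical.choose hmem)).eval a) ∈ D0 R := by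
      refine ⟨g - Classical.choose hmem, fun a => ?_, fun a => ?_⟩
      · rw [eval_sub, ← hg1 a, ← Classical.choose_spec hmem a, sub_self]
      · simp [← hgD a]
    refine ⟨⟨⟨F1, hmem⟩, ⟨_, hdmem⟩⟩, ?_⟩
    apply Subtype.ext
    apply Prod.ext
    · rfl
    · funext a
      show (derivative (Classical.choose hmem)).eval a +
        (D a - (derivative (Classical.choose hmem)).eval a) = D a
      ring

end Count

section Stab

variable (R : Type*) [CommRing R] [IsLocalRing R] [Finite R]

lemma alg_inl (r : R) : algebraMap R (DualNumber R) r = inl r := by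
  apply TrivSqZeroExt.ext <;> simp [TrivSqZeroExt.algebraMap_eq_inl]

def Gd (d : R → R) : DualNumber R → DualNumber R :=
  fun x => inl x.fst + inr (x.snd * (1 + d x.fst))

lemma fst_Gd (d : R → R) (x : DualNumber R) : (Gd R d x).fst = x.fst := by
  simp [Gd]

lemma snd_Gd (d : R → R) (x : DualNumber R) : (Gd R d x).snd = x.snd * (1 + d x.fst) := by
  simp [Gd]

lemma Gd_mem (hR : ¬IsField R) {d : R → R} (hd : d ∈ D0 R) : Gd R d ∈ polyStabilizer R := by
  obtain ⟨h, hnull, hdh⟩ := hd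
  have hdm : ∀ x, Gd R d x = (comb (X + h) 0).eval x := by
    intro x
    apply TrivSqZeroExt.ext
    · rw [eval_fst, p1_comb, fst_Gd]
      simp [hnull]
    · rw [eval_snd, p1_comb, p2_comb, snd_Gd]
      simp [hdh]
  refine ⟨⟨comb (X + h) 0, hdm⟩, ?_, ?_⟩
  · obtain ⟨t, ht0, ht2⟩ := exists_sq_zero R hR
    have hu : ∀ a, IsUnit (1 + d a) := by
      intro a
      apply unit_of_ann R ht0
      have htay := taylor_sq h a t ht2
      rw [hnull, hnull, zero_add] at htay
      rw [hdh]
      exact htay.symm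
    choose v hv using fun a => isUnit_iff_exists_inv.mp (hu a)
    rw [Function.bijective_iff_has_inverse]
    refine ⟨fun x => inl x.fst + inr (x.snd * v x.fst), ?_, ?_⟩
    · intro x
      apply TrivSqZeroExt.ext
      · simp [fst_Gd]
      · rw [show ((inl ((Gd R d x).fst) + inr ((Gd R d x).snd * v ((Gd R d x).fst)) : DualNumber R)).snd
            = (Gd R d x).snd * v ((Gd R d x).fst) by simp]
        rw [snd_Gd, fst_Gd]
        rw [mul_assoc, hv]
        simp
    · intro x
      apply TrivSqZeroExt.ext
      · simp [fst_Gd]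
      · rw [snd_Gd]
        simp only [TrivSqZeroExt.fst_add, TrivSqZeroExt.snd_add, fst_inl, snd_inl, fst_inr,
          snd_inr, add_zero, zero_add]
        rw [mul_assoc, mul_comm (v x.fst), hv]
        simp
  · intro r
    rw [alg_inl]
    apply TrivSqZeroExt.ext
    · simp [fst_Gd]
    · rw [snd_Gd]
      simp

noncomputable def Theta (hR : ¬IsField R) (d : ↥(D0 R)) : ↥(polyStabilizer R) :=
  ⟨Gd R d.1, Gd_mem R hR d.2⟩

lemma Theta_bij (hR : ¬IsField R) : Function.Bijective (Theta R hR) := by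
  constructor
  · rintro ⟨d, hd⟩ ⟨e, he⟩ h
    simp only [Theta, Subtype.mk.injEq] at h
    apply Subtype.ext
    funext a
    have h2 := congrArg TrivSqZeroExt.snd (congrFun h (inl a + ε))
    rw [snd_Gd, snd_Gd] at h2
    simp only [TrivSqZeroExt.fst_add, TrivSqZeroExt.snd_add, fst_inl, snd_inl, fst_eps,
      snd_eps, add_zero, zero_add, one_mul] at h2
    exact add_left_cancel h2
  · rintro ⟨G, ⟨f, hf⟩, hbij, hfix⟩
    have h1 : ∀ r : R, (p1 f).eval r = r := by
      intro r
      have h' := congrArg TrivSqZeroExt.fst (hfix r)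
      rw [alg_inl, hf, eval_fst] at h'
      simpa using h'
    have h2 : ∀ r : R, (p2 f).eval r = 0 := by
      intro r
      have h' := congrArg TrivSqZeroExt.snd (hfix r)
      rw [alg_inl, hf, eval_snd] at h'
      simpa using h'
    have hnull : ∀ a, (p1 f - X).eval a = 0 := by
      intro a; simp [h1]
    refine ⟨⟨fun a => (derivative (p1 f - X)).eval a, ⟨p1 f - X, hnull, fun a => rfl⟩⟩, ?_⟩
    apply Subtype.ext
    funext x
    show Gd R _ x = G x
    rw [hf x]
    apply TrivSqZeroExt.ext
    · rw [eval_fst, fst_Gd, h1]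
    · rw [eval_snd, snd_Gd, h2, add_zero]
      simp only [derivative_sub, derivative_X, eval_sub, eval_one]
      ring

end Stab


end DNAux

end AuxDN

open DNAux in
/-- **Corollary.**
For a finite commutative local ring `R` which is not a field,
`|F(R[α])| = |F(R)|² · |St_α(R)|`. -/
theorem card_polyFun_dualNumber_local_not_field (R : Type*) [CommRing R]
    [Finite R] [IsLocalRing R] (hR : ¬IsField R) :
    Nat.card (polyFunctions (DualNumber R)) =
      Nat.card (polyFunctions R) ^ 2 * Nat.card (polyStabilizer R) := by
  have e1 : Nat.card (polyFunctions (DualNumber R)) =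
      Nat.card (SS R) * Nat.card (polyFunctions R) := by
    rw [Nat.card_congr (Equiv.ofBijective _ (Phi_bij (R := R)))]
    exact Nat.card_prod _ _
  have e2 : Nat.card (SS R) = Nat.card (polyFunctions R) * Nat.card (D0 R) := by
    rw [← Nat.card_prod]
    exact (Nat.card_congr (Equiv.ofBijective _ (Psi_bij (R := R)))).symm
  have e3 : Nat.card (polyStabilizer R) = Nat.card (D0 R) :=
    (Nat.card_congr (Equiv.ofBijective _ (Theta_bij R hR))).symm
  rw [e1, e2, e3]
  ring
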